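/- arXiv:2503.08848 — 3 statements merged into one kernel-verified Lean document; each statement's English description precedes it below -/
import Mathlib

section
/- Let q ∈ (0,1), κ ∈ (0,1), h = q(q + 2√κ + qκ)/(1−q²), and z_c = (1 + q√κ)/(q + √κ). Define S(z) = log(1 − q/z) − κ·log(1 − qz) − h·log(z). Then S″(z_c) = 0. -/
open Complex Filter

set_option maxHeartbeats 2000000 in
theorem statement3 (q κ h zc : ℝ) (hq : q ∈ Set.Ioo (0:ℝ) 1) (hκ : κ ∈ Set.Ioo (0:ℝ) 1)
    (hh : h = q * (q + 2 * Real.sqrt κ + q * κ) / (1 - q ^ 2))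
    (hzc : zc = (1 + q * Real.sqrt κ) / (q + Real.sqrt κ)) :
    iteratedDeriv 2 (fun z : ℂ =>
        Complex.log (1 - (q : ℂ) / z) - (κ : ℂ) * Complex.log (1 - (q : ℂ) * z)
          - (h : ℂ) * Complex.log z) (zc : ℂ) = 0 := by
  obtain ⟨hq0, hq1⟩ := hq
  obtain ⟨hκ0, hκ1⟩ := hκ
  set s : ℝ := Real.sqrt κ with hs
  have hsq : s ^ 2 = κ := Real.sq_sqrt hκ0.le
  have hs0 : 0 < s := Real.sqrt_pos.2 hκ0
  have hs1 : s < 1 := by nlinarith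
  have hqs : 0 < q + s := by linarith
  have hzc1 : 1 < zc := by
    rw [hzc, lt_div_iff₀ hqs]; nlinarith
  have hzcq : q < zc := lt_trans hq1 hzc1
  have hzc0 : (0:ℝ) < zc := lt_trans one_pos hzc1
  have hqzc : q * zc < 1 := by
    rw [hzc, ← mul_div_assoc, div_lt_one hqs]
    nlinarith [mul_pos (mul_pos hs0 (sub_pos.2 hq1)) (show (0:ℝ) < 1 + q by linarith)]
  -- complex versions
  set Z : ℂ := (zc : ℂ) with hZ
  have hZ0 : Z ≠ 0 := by
    simpa [hZ] using Complex.ofReal_ne_zero.2 (ne_of_gt hzc0)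
  have hZq : Z - (q:ℂ) ≠ 0 := by
    rw [hZ, ← Complex.ofReal_sub]
    exact Complex.ofReal_ne_zero.2 (by linarith)
  have hZqz : (1:ℂ) - (q:ℂ) * Z ≠ 0 := by
    rw [hZ, ← Complex.ofReal_mul, ← Complex.ofReal_one, ← Complex.ofReal_sub]
    exact Complex.ofReal_ne_zero.2 (by linarith)
  have hZdiv : (1:ℂ) - (q:ℂ) / Z ≠ 0 := by
    rw [hZ, ← Complex.ofReal_div, ← Complex.ofReal_one, ← Complex.ofReal_sub]
    refine Complex.ofReal_ne_zero.2 (ne_of_gt ?_)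
    have : q / zc < 1 := (div_lt_one hzc0).2 hzcq
    linarith
  set f : ℂ → ℂ := fun z =>
      Complex.log (1 - (q : ℂ) / z) - (κ : ℂ) * Complex.log (1 - (q : ℂ) * z)
        - (h : ℂ) * Complex.log z with hf
  set g : ℂ → ℂ := fun z =>
      (q:ℂ) / (z ^ 2 - (q:ℂ) * z) + ((κ:ℂ) * q) / (1 - (q:ℂ) * z) - (h:ℂ) / z with hg
  -- f has derivative g on the set where everything is nice
  have key : ∀ z : ℂ, z ≠ 0 → (1 - (q:ℂ)/z) ∈ slitPlane → (1 - (q:ℂ)*z) ∈ slitPlane →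
      z ∈ slitPlane → HasDerivAt f (g z) z := by
    intro z hz0 m1 m2 m3
    have hne1 : (1:ℂ) - (q:ℂ)/z ≠ 0 := Complex.slitPlane_ne_zero m1
    have hne2 : (1:ℂ) - (q:ℂ)*z ≠ 0 := Complex.slitPlane_ne_zero m2
    have hzq : z - (q:ℂ) ≠ 0 := by
      have e : z - (q:ℂ) = z * (1 - (q:ℂ)/z) := by field_simp
      rw [e]; exact mul_ne_zero hz0 hne1
    have hzz : z ^ 2 - (q:ℂ) * z ≠ 0 := by
      have e : z ^ 2 - (q:ℂ) * z = z * (z - (q:ℂ)) := by ring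
      rw [e]; exact mul_ne_zero hz0 hzq
    have D : HasDerivAt f
        ((0 - (0 * z - (q:ℂ) * 1) / z ^ 2) / (1 - (q:ℂ)/z)
          - (κ:ℂ) * ((0 - (q:ℂ) * 1) / (1 - (q:ℂ)*z)) - (h:ℂ) * z⁻¹) z :=
      ((((hasDerivAt_const z (1:ℂ)).sub ((hasDerivAt_const z ((q:ℂ))).div
          (hasDerivAt_id z) hz0)).clog m1).sub
        ((((hasDerivAt_const z (1:ℂ)).sub ((hasDerivAt_id z).const_mul (q:ℂ))).clog
          m2).const_mul (κ:ℂ))).sub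
        ((Complex.hasDerivAt_log m3).const_mul (h:ℂ))
    convert D using 1
    have e1 : (1:ℂ) - (q:ℂ)/z = (z - (q:ℂ))/z := by field_simp
    have t1 : ((0:ℂ) - (0 * z - (q:ℂ) * 1) / z ^ 2) / (1 - (q:ℂ)/z)
        = (q:ℂ) / (z ^ 2 - (q:ℂ) * z) := by
      rw [div_eq_div_iff hne1 hzz]
      field_simp
      ring
    simp only [hg]
    rw [t1]
    ring
  -- the conditions hold at Z, hence in a neighbourhood
  have m1Z : (1 - (q:ℂ)/Z) ∈ slitPlane := by
    rw [hZ, ← Complex.ofReal_div, ← Complex.ofReal_one, ← Complex.ofReal_sub]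
    refine Complex.ofReal_mem_slitPlane.2 ?_
    have : q / zc < 1 := (div_lt_one hzc0).2 hzcq
    linarith
  have m2Z : (1 - (q:ℂ)*Z) ∈ slitPlane := by
    rw [hZ, ← Complex.ofReal_mul, ← Complex.ofReal_one, ← Complex.ofReal_sub]
    exact Complex.ofReal_mem_slitPlane.2 (by linarith)
  have m3Z : Z ∈ slitPlane := by
    rw [hZ]; exact Complex.ofReal_mem_slitPlane.2 hzc0
  have ev : ∀ᶠ z in nhds Z, z ≠ 0 ∧ (1 - (q:ℂ)/z) ∈ slitPlane ∧
      (1 - (q:ℂ)*z) ∈ slitPlane ∧ z ∈ slitPlane := by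
    have e0 : ∀ᶠ z in nhds Z, z ≠ 0 := eventually_ne_nhds hZ0
    have c1 : ContinuousAt (fun z : ℂ => 1 - (q:ℂ)/z) Z :=
      continuousAt_const.sub (continuousAt_const.div continuousAt_id hZ0)
    have e1 : ∀ᶠ z in nhds Z, (1 - (q:ℂ)/z) ∈ slitPlane :=
      c1.eventually_mem (Complex.isOpen_slitPlane.mem_nhds m1Z)
    have c2 : ContinuousAt (fun z : ℂ => 1 - (q:ℂ)*z) Z :=
      continuousAt_const.sub (continuousAt_const.mul continuousAt_id)
    have e2 : ∀ᶠ z in nhds Z, (1 - (q:ℂ)*z) ∈ slitPlane :=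
      c2.eventually_mem (Complex.isOpen_slitPlane.mem_nhds m2Z)
    have e3 : ∀ᶠ z in nhds Z, z ∈ slitPlane :=
      continuousAt_id.eventually_mem (Complex.isOpen_slitPlane.mem_nhds m3Z)
    filter_upwards [e0, e1, e2, e3] with z h0 h1 h2 h3
    exact ⟨h0, h1, h2, h3⟩
  have hderiv_eq : deriv f =ᶠ[nhds Z] g := by
    filter_upwards [ev] with z hz
    exact (key z hz.1 hz.2.1 hz.2.2.1 hz.2.2.2).deriv
  -- derivative of g at Z
  have hZZ : Z ^ 2 - (q:ℂ) * Z ≠ 0 := by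
    have : Z ^ 2 - (q:ℂ) * Z = Z * (Z - (q:ℂ)) := by ring
    rw [this]; exact mul_ne_zero hZ0 hZq
  have G1 : HasDerivAt (fun z : ℂ => (q:ℂ) / (z ^ 2 - (q:ℂ) * z))
      ((0 * (Z ^ 2 - (q:ℂ) * Z) - (q:ℂ) * ((2:ℕ) * Z ^ 1 - (q:ℂ) * 1)) / (Z ^ 2 - (q:ℂ) * Z) ^ 2) Z :=
    (hasDerivAt_const Z ((q:ℂ))).div ((hasDerivAt_pow 2 Z).sub ((hasDerivAt_id Z).const_mul (q:ℂ))) hZZ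
  have G2 : HasDerivAt (fun z : ℂ => ((κ:ℂ) * q) / (1 - (q:ℂ) * z))
      ((0 * (1 - (q:ℂ) * Z) - ((κ:ℂ) * q) * (0 - (q:ℂ) * 1)) / (1 - (q:ℂ) * Z) ^ 2) Z :=
    (hasDerivAt_const Z ((κ:ℂ) * q)).div
      ((hasDerivAt_const Z (1:ℂ)).sub ((hasDerivAt_id Z).const_mul (q:ℂ))) hZqz
  have G3 : HasDerivAt (fun z : ℂ => (h:ℂ) / z)
      ((0 * Z - (h:ℂ) * 1) / Z ^ 2) Z :=
    (hasDerivAt_const Z ((h:ℂ))).div (hasDerivAt_id Z) hZ0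
  have G : HasDerivAt g
      ((0 * (Z ^ 2 - (q:ℂ) * Z) - (q:ℂ) * ((2:ℕ) * Z ^ 1 - (q:ℂ) * 1)) / (Z ^ 2 - (q:ℂ) * Z) ^ 2
        + (0 * (1 - (q:ℂ) * Z) - ((κ:ℂ) * q) * (0 - (q:ℂ) * 1)) / (1 - (q:ℂ) * Z) ^ 2
        - (0 * Z - (h:ℂ) * 1) / Z ^ 2) Z := (G1.add G2).sub G3
  rw [iteratedDeriv_succ, iteratedDeriv_one]
  rw [hderiv_eq.deriv_eq, G.deriv]
  have hred : (0 * (Z ^ 2 - (q:ℂ) * Z) - (q:ℂ) * ((2:ℕ) * Z ^ 1 - (q:ℂ) * 1)) / (Z ^ 2 - (q:ℂ) * Z) ^ 2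
        + (0 * (1 - (q:ℂ) * Z) - ((κ:ℂ) * q) * (0 - (q:ℂ) * 1)) / (1 - (q:ℂ) * Z) ^ 2
        - (0 * Z - (h:ℂ) * 1) / Z ^ 2
      = (((0 * (zc ^ 2 - q * zc) - q * (2 * zc ^ 1 - q * 1)) / (zc ^ 2 - q * zc) ^ 2
        + (0 * (1 - q * zc) - (κ * q) * (0 - q * 1)) / (1 - q * zc) ^ 2
        - (0 * zc - h * 1) / zc ^ 2 : ℝ) : ℂ) := by
    rw [hZ]; push_cast; ring
  rw [hred, Complex.ofReal_eq_zero]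
  have h1q2 : 1 - q ^ 2 ≠ 0 := by nlinarith
  have h1qs : 1 + q * s ≠ 0 := by positivity
  have k1 : zc ^ 2 - q * zc = (1 + q * s) * (1 - q ^ 2) / (q + s) ^ 2 := by
    rw [hzc]; field_simp; ring
  have k2 : 1 - q * zc = s * (1 - q ^ 2) / (q + s) := by
    rw [hzc]; field_simp; ring
  rw [hh, ← hsq, k1, k2, hzc]
  field_simp
  ring
end

section
/- Fix q, b ∈ (0,1), set z_c = (1 + qb)/(q + b) and h = q(q + 2b + qb²)/(1 − q²) (with κ = b²). Define S(z) = log(1 − q/z) − b²·log(1 − qz) − h·log(z). For R ∈ (0, z_c] and z(θ) = R·e^{iθ} with θ ∈ (0, π), the map θ ↦ Re[S(z(θ))] is strictly increasing; i.e., (d/dθ) Re[S(Re^{iθ})] > 0 for θ ∈ (0, π). -/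
open Real

set_option maxHeartbeats 1000000 in
theorem statement11 (q b R θ : ℝ) (hq : q ∈ Set.Ioo (0:ℝ) 1) (hb : b ∈ Set.Ioo (0:ℝ) 1)
    (hR : R ∈ Set.Ioc (0:ℝ) ((1 + q * b) / (q + b))) (hθ : θ ∈ Set.Ioo 0 π) :
    0 < deriv (fun t : ℝ =>
      (Complex.log (1 - (q : ℂ) / ((R : ℂ) * Complex.exp ((t : ℂ) * Complex.I)))
        - ((b ^ 2 : ℝ) : ℂ) * Complex.log (1 - (q : ℂ) * ((R : ℂ) * Complex.exp ((t : ℂ) * Complex.I)))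
        - ((q * (q + 2 * b + q * b ^ 2) / (1 - q ^ 2) : ℝ) : ℂ) *
            Complex.log ((R : ℂ) * Complex.exp ((t : ℂ) * Complex.I))).re) θ := by
  obtain ⟨hq0, hq1⟩ := hq
  obtain ⟨hb0, hb1⟩ := hb
  obtain ⟨hR0, hRc⟩ := hR
  obtain ⟨hθ0, hθπ⟩ := hθ
  set hh : ℝ := q * (q + 2 * b + q * b ^ 2) / (1 - q ^ 2) with hhdef
  set g : ℝ → ℝ := fun t =>
    (1/2) * Real.log (R^2 - 2*q*R*Real.cos t + q^2) - Real.log R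
      - b^2 * ((1/2) * Real.log (1 - 2*q*R*Real.cos t + q^2*R^2)) - hh * Real.log R with hgdef
  -- eventual equality
  have hmem : Set.Ioo (0:ℝ) π ∈ nhds θ := Ioo_mem_nhds hθ0 hθπ
  have heq : (fun t : ℝ =>
      (Complex.log (1 - (q : ℂ) / ((R : ℂ) * Complex.exp ((t : ℂ) * Complex.I)))
        - ((b ^ 2 : ℝ) : ℂ) * Complex.log (1 - (q : ℂ) * ((R : ℂ) * Complex.exp ((t : ℂ) * Complex.I)))
        - ((q * (q + 2 * b + q * b ^ 2) / (1 - q ^ 2) : ℝ) : ℂ) *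
            Complex.log ((R : ℂ) * Complex.exp ((t : ℂ) * Complex.I))).re) =ᶠ[nhds θ] g := by
    filter_upwards [hmem] with t ht
    obtain ⟨ht0, htπ⟩ := ht
    have hsin : 0 < Real.sin t := Real.sin_pos_of_pos_of_lt_pi ht0 htπ
    have hcossin : Real.sin t ^ 2 + Real.cos t ^ 2 = 1 := Real.sin_sq_add_cos_sq t
    set z : ℂ := (R : ℂ) * Complex.exp ((t : ℂ) * Complex.I) with hzdef
    have hzre : z.re = R * Real.cos t := by
      simp [hzdef, Complex.mul_re, Complex.exp_ofReal_mul_I_re, Complex.exp_ofReal_mul_I_im]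
    have hzim : z.im = R * Real.sin t := by
      simp [hzdef, Complex.mul_im, Complex.exp_ofReal_mul_I_re, Complex.exp_ofReal_mul_I_im]
    have hzimne : z.im ≠ 0 := by
      rw [hzim]
      exact (mul_pos hR0 hsin).ne'
    have hz0 : z ≠ 0 := by
      intro h0
      exact hzimne (by rw [h0]; simp)
    have hzq0 : z - (q:ℂ) ≠ 0 := by
      intro h0
      have : (z - (q:ℂ)).im = 0 := by rw [h0]; simp
      rw [Complex.sub_im, Complex.ofReal_im, sub_zero] at this
      exact hzimne this
    have habsz : ‖z‖ = R := by
      rw [hzdef]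
      simp [Complex.norm_exp, abs_of_pos hR0]
    have hdiv : (1 : ℂ) - (q : ℂ) / z = (z - q) / z := by field_simp
    have habs1 : (‖z - q‖) ^ 2 = R^2 - 2*q*R*Real.cos t + q^2 := by
      rw [Complex.sq_norm, Complex.normSq_apply]
      simp only [Complex.sub_re, Complex.sub_im, hzre, hzim, Complex.ofReal_re, Complex.ofReal_im]
      nlinarith [hcossin]
    have hlog1 : Real.log (‖z - q‖) =
        (1/2) * Real.log (R^2 - 2*q*R*Real.cos t + q^2) := by
      rw [← habs1, Real.log_pow]
      push_cast
      ring
    have habs2 : (‖1 - (q:ℂ) * z‖) ^ 2 = 1 - 2*q*R*Real.cos t + q^2*R^2 := by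
      rw [Complex.sq_norm, Complex.normSq_apply]
      simp only [Complex.sub_re, Complex.sub_im, Complex.mul_re, Complex.mul_im, hzre, hzim,
        Complex.ofReal_re, Complex.ofReal_im, Complex.one_re, Complex.one_im]
      nlinarith [hcossin]
    have hlog2 : Real.log (‖1 - (q:ℂ) * z‖) =
        (1/2) * Real.log (1 - 2*q*R*Real.cos t + q^2*R^2) := by
      rw [← habs2, Real.log_pow]
      push_cast
      ring
    have habsne : ‖z - q‖ ≠ 0 := norm_ne_zero_iff.mpr hzq0
    show (Complex.log (1 - (q : ℂ) / z) - ((b ^ 2 : ℝ) : ℂ) * Complex.log (1 - (q : ℂ) * z)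
        - ((q * (q + 2 * b + q * b ^ 2) / (1 - q ^ 2) : ℝ) : ℂ) * Complex.log z).re = g t
    rw [Complex.sub_re, Complex.sub_re, Complex.re_ofReal_mul, Complex.re_ofReal_mul,
      Complex.log_re, Complex.log_re, Complex.log_re, hdiv, norm_div, habsz,
      Real.log_div habsne hR0.ne', hlog1, hlog2, hgdef]
  rw [heq.deriv_eq]
  -- compute deriv g
  have hcos : Real.cos θ < 1 := by
    have := Real.cos_lt_cos_of_nonneg_of_le_pi (le_refl 0) (le_of_lt hθπ) hθ0
    simpa using this
  have hqR : 0 < q * R := mul_pos hq0 hR0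
  have hD1 : 0 < R^2 - 2*q*R*Real.cos θ + q^2 := by nlinarith [sq_nonneg (R - q)]
  have hD2 : 0 < 1 - 2*q*R*Real.cos θ + q^2*R^2 := by nlinarith [sq_nonneg (1 - q*R)]
  have hsinθ : 0 < Real.sin θ := Real.sin_pos_of_pos_of_lt_pi hθ0 hθπ
  have h1 : HasDerivAt (fun t : ℝ => R^2 - 2*q*R*Real.cos t + q^2) (2*q*R*Real.sin θ) θ := by
    have hc : HasDerivAt (fun t : ℝ => Real.cos t) (-Real.sin θ) θ := Real.hasDerivAt_cos θ
    have := ((hc.const_mul (2*q*R)).const_sub (R^2)).add_const (q^2)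
    exact this.congr_deriv (by ring)
  have h2 : HasDerivAt (fun t : ℝ => 1 - 2*q*R*Real.cos t + q^2*R^2) (2*q*R*Real.sin θ) θ := by
    have hc : HasDerivAt (fun t : ℝ => Real.cos t) (-Real.sin θ) θ := Real.hasDerivAt_cos θ
    have := ((hc.const_mul (2*q*R)).const_sub (1:ℝ)).add_const (q^2*R^2)
    exact this.congr_deriv (by ring)
  have hL1 : HasDerivAt (fun t : ℝ => Real.log (R^2 - 2*q*R*Real.cos t + q^2))
      (2*q*R*Real.sin θ / (R^2 - 2*q*R*Real.cos θ + q^2)) θ := h1.log hD1.ne'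
  have hL2 : HasDerivAt (fun t : ℝ => Real.log (1 - 2*q*R*Real.cos t + q^2*R^2))
      (2*q*R*Real.sin θ / (1 - 2*q*R*Real.cos θ + q^2*R^2)) θ := h2.log hD2.ne'
  have hg : HasDerivAt g
      ((1/2) * (2*q*R*Real.sin θ / (R^2 - 2*q*R*Real.cos θ + q^2))
        - b^2 * ((1/2) * (2*q*R*Real.sin θ / (1 - 2*q*R*Real.cos θ + q^2*R^2)))) θ :=
    (((hL1.const_mul (1/2 : ℝ)).sub_const (Real.log R)).sub
      ((hL2.const_mul (1/2 : ℝ)).const_mul (b^2))).sub_const (hh * Real.log R)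
  rw [hg.deriv]
  -- positivity
  set D1 : ℝ := R^2 - 2*q*R*Real.cos θ + q^2 with hD1def
  set D2 : ℝ := 1 - 2*q*R*Real.cos θ + q^2*R^2 with hD2def
  have hqb : (0:ℝ) < q + b := by linarith
  have hRqb : R * (q + b) ≤ 1 + q * b := by
    have h := mul_le_mul_of_nonneg_right hRc hqb.le
    rwa [div_mul_cancel₀ _ hqb.ne'] at h
  clear heq hg hL1 hL2 h1 h2 hmem
  have hfac1 : 0 ≤ 1 + b*q - R*(q+b) := by linarith
  have hfac2 : 0 < 1 - b*q + R*(b-q) := by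
    rcases le_or_gt q b with h | h
    · nlinarith [mul_nonneg hR0.le (sub_nonneg.mpr h)]
    · nlinarith [mul_le_mul_of_nonneg_right hRqb (sub_nonneg.mpr h.le),
        mul_pos hb0 (mul_pos (sub_pos.mpr hq1) (by linarith : (0:ℝ) < 1 + q))]
  have hkey : 0 < D2 - b^2 * D1 := by
    rw [hD1def, hD2def]
    nlinarith [mul_nonneg hfac1 hfac2.le,
      mul_pos hqR (mul_pos (sub_pos.mpr hcos) (by nlinarith : (0:ℝ) < 1 - b^2))]
  have h1' : (1/2 : ℝ) * (2*q*R*Real.sin θ / D1) = (q*R*Real.sin θ) / D1 := by ring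
  have h2' : b ^ 2 * ((1/2 : ℝ) * (2*q*R*Real.sin θ / D2)) = (b^2 * (q*R*Real.sin θ)) / D2 := by
    ring
  rw [sub_pos, h1', h2', div_lt_div_iff₀ hD2 hD1]
  nlinarith [mul_pos (mul_pos hqR hsinθ) hkey]
end

section
/- Let w : ℤ≥1 × ℤ≥1 → ℤ≥0 be a symmetric array of nonnegative integers, and for (m,n) ∈ ℤ≥1² and 1 ≤ k ≤ min(m,n) define G_k(m,n) as the maximal total weight of k pairwise disjoint up-right lattice paths π₁,…,π_k where πᵢ goes from (1,i) to (m, n−k+i). Then for each fixed (m,n) and 2 ≤ k ≤ min(m,n), the sequence λ_k = G_k(m,n) − G_{k−1}(m,n) is nonincreasing in k, i.e., G_k − G_{k−1} ≥ G_{k+1} − G_k whenever k+1 ≤ min(m,n). (Concavity of k ↦ G_k(m,n).) -/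
/-- A single up-right step in ℤ². -/
def UpStep (u v : ℤ × ℤ) : Prop := v = (u.1, u.2 + 1) ∨ v = (u.1 + 1, u.2)

/-- `l` is an up-right lattice path from `u` to `v`. -/
def IsUpRightPath (u v : ℤ × ℤ) (l : List (ℤ × ℤ)) : Prop :=
  l ≠ [] ∧ l.head? = some u ∧ l.getLast? = some v ∧ l.Chain' UpStep

/-- The weight of a path: the sum of `w` over its vertices. -/
def pathWeight (w : ℤ × ℤ → ℕ) (l : List (ℤ × ℤ)) : ℕ := (l.map w).sum

/-- The rank-`k` last passage time `G_k(m,n)`: the maximal total weight of `k` pairwise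
vertex-disjoint up-right paths, the `i`-th going from `(1, i)` to `(m, n − k + i)`. -/
noncomputable def lppG (w : ℤ × ℤ → ℕ) (m n : ℤ) (k : ℕ) : ℕ :=
  sSup {S : ℕ | ∃ π : Fin k → List (ℤ × ℤ),
    (∀ i : Fin k, IsUpRightPath (1, (i : ℤ) + 1) (m, n - (k : ℤ) + (i : ℤ) + 1) (π i)) ∧
    (∀ i j : Fin k, i ≠ j → ∀ v, v ∈ π i → v ∉ π j) ∧
    S = ∑ i : Fin k, pathWeight w (π i)}

namespace S15aux

def Steps (t0 t1 : ℤ) (y : ℤ → ℤ) : Prop :=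
  ∀ t, t0 ≤ t → t < t1 → y (t+1) = y t ∨ y (t+1) = y t + 1

theorem Steps.bound {t0 t1 : ℤ} {y : ℤ → ℤ} (h : Steps t0 t1 y) {s t : ℤ}
    (hs : t0 ≤ s) (hst : s ≤ t) (ht : t ≤ t1) : y s ≤ y t ∧ y t ≤ y s + (t - s) := by
  have key : ∀ u : ℤ, s ≤ u → u ≤ t1 → y s ≤ y u ∧ y u ≤ y s + (u - s) := by
    refine Int.le_induction ?_ ?_
    · intro _; omega
    · intro v hv ih hv1
      have h1 := ih (by omega)
      have h2 := h v (by omega) (by omega)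
      omega
  exact key t hst ht

def cell (y : ℤ → ℤ) (t : ℤ) : ℤ × ℤ := (t - y t, y t)

def cells (t0 t1 : ℤ) (y : ℤ → ℤ) : List (ℤ × ℤ) :=
  (List.range (t1 + 1 - t0).toNat).map (fun j : ℕ => cell y (t0 + (j : ℤ)))

theorem cell_sum (y : ℤ → ℤ) (t : ℤ) : (cell y t).1 + (cell y t).2 = t := by
  simp [cell]

theorem mem_cells {t0 t1 : ℤ} {y : ℤ → ℤ} {p : ℤ × ℤ} :
    p ∈ cells t0 t1 y ↔ t0 ≤ p.1 + p.2 ∧ p.1 + p.2 ≤ t1 ∧ p.2 = y (p.1 + p.2) := by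
  simp only [cells, List.mem_map, List.mem_range]
  constructor
  · rintro ⟨j, hj, rfl⟩
    simp only [cell]
    refine ⟨by omega, by omega, ?_⟩
    have harg : (t0 + (j:ℤ) - y (t0 + (j:ℤ))) + y (t0 + (j:ℤ)) = t0 + (j:ℤ) := by ring
    rw [harg]
  · rintro ⟨h1, h2, h3⟩
    refine ⟨(p.1 + p.2 - t0).toNat, by omega, ?_⟩
    have ht : t0 + ((p.1 + p.2 - t0).toNat : ℤ) = p.1 + p.2 := by omega
    rw [ht]
    have h4 : p.1 = p.1 + p.2 - y (p.1 + p.2) := by omega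
    exact Prod.ext h4.symm h3.symm

theorem isUpRightPath_cells {t0 t1 : ℤ} {y : ℤ → ℤ} (h01 : t0 ≤ t1) (h : Steps t0 t1 y) :
    IsUpRightPath (t0 - y t0, y t0) (t1 - y t1, y t1) (cells t0 t1 y) := by
  have hN : (t1 + 1 - t0).toNat = (t1 - t0).toNat + 1 := by omega
  refine ⟨?_, ?_, ?_, ?_⟩
  · apply List.ne_nil_of_length_pos
    simp only [cells, List.length_map, List.length_range]
    omega
  · rw [cells, hN]
    rw [List.range_succ_eq_map]
    simp [cell]
  · have hsplit : cells t0 t1 y = (List.range (t1 - t0).toNat).map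
        (fun j : ℕ => cell y (t0 + (j : ℤ)))
        ++ [cell y (t0 + ((t1 - t0).toNat : ℤ))] := by
      rw [cells, hN, List.range_succ, List.map_append]
      rfl
    rw [hsplit, List.getLast?_concat]
    have harg : t0 + ((t1 - t0).toNat : ℤ) = t1 := by omega
    rw [harg]
    rfl
  · rw [cells]; unfold List.Chain'; rw [List.isChain_iff_getElem]
    intro i hi
    simp only [List.length_map, List.length_range] at hi
    simp only [List.getElem_map, List.getElem_range]
    have hstep := h (t0 + i) (by omega) (by omega)
    have hc : (t0 + ((i+1:ℕ) : ℤ)) = (t0 + (i:ℤ)) + 1 := by push_cast; ring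
    rw [hc]
    rcases hstep with h' | h'
    · right
      simp only [cell, h', Prod.mk.injEq]
      exact ⟨by ring, trivial⟩
    · left
      simp only [cell, h', Prod.mk.injEq]
      exact ⟨by ring, trivial⟩

theorem list_sum_range (g : ℕ → ℕ) (N : ℕ) :
    ((List.range N).map g).sum = ∑ j ∈ Finset.range N, g j := by
  induction N with
  | zero => simp
  | succ n ih => rw [List.range_succ, List.map_append, List.sum_append,
      Finset.sum_range_succ, ih]; simp

theorem pathWeight_cells (w : ℤ × ℤ → ℕ) {t0 t1 : ℤ} (y : ℤ → ℤ) (h01 : t0 ≤ t1) :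
    pathWeight w (cells t0 t1 y) = ∑ t ∈ Finset.Icc t0 t1, w (cell y t) := by
  rw [pathWeight, cells, List.map_map]
  rw [show ((fun p => w p) ∘ (fun j : ℕ => cell y (t0 + (j : ℤ)))) =
    (fun j : ℕ => w (cell y (t0 + (j : ℤ)))) from rfl]
  rw [list_sum_range]
  refine Finset.sum_bij' (fun (j : ℕ) (_ : j ∈ Finset.range (t1 + 1 - t0).toNat) => t0 + (j:ℤ))
    (fun (t : ℤ) (_ : t ∈ Finset.Icc t0 t1) => (t - t0).toNat) ?_ ?_ ?_ ?_ ?_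
  · intro a ha; simp only [Finset.mem_range] at ha; simp only [Finset.mem_Icc]; omega
  · intro a ha; simp only [Finset.mem_Icc] at ha; simp only [Finset.mem_range]; omega
  · intro a ha; simp only [Finset.mem_range] at ha
    show (t0 + (a:ℤ) - t0).toNat = a
    omega
  · intro a ha; simp only [Finset.mem_Icc] at ha
    show t0 + (((a - t0).toNat : ℕ) : ℤ) = a
    omega
  · intro a ha; rfl

theorem extract : ∀ (l : List (ℤ × ℤ)) (u v : ℤ × ℤ), IsUpRightPath u v l → ∃ y : ℤ → ℤ,
    u.1 + u.2 ≤ v.1 + v.2 ∧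
    y (u.1 + u.2) = u.2 ∧ y (v.1 + v.2) = v.2 ∧
    Steps (u.1 + u.2) (v.1 + v.2) y ∧
    (∀ p : ℤ × ℤ, p ∈ l ↔ (u.1 + u.2 ≤ p.1 + p.2 ∧ p.1 + p.2 ≤ v.1 + v.2 ∧
      p.2 = y (p.1 + p.2))) ∧
    ∀ w : ℤ × ℤ → ℕ, pathWeight w l = ∑ t ∈ Finset.Icc (u.1 + u.2) (v.1 + v.2), w (cell y t) := by
  intro l
  induction l with
  | nil => intro u v h; exact absurd rfl h.1
  | cons a l ih =>
    intro u v h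
    obtain ⟨hne, hhead, hlast, hchain⟩ := h
    have hau : a = u := by simpa using hhead
    subst hau
    cases l with
    | nil =>
      obtain rfl : a = v := by simpa using hlast
      refine ⟨fun _ => a.2, le_refl _, rfl, rfl, ?_, ?_, ?_⟩
      · intro t ht ht'; omega
      · intro p
        simp only [List.mem_singleton]
        constructor
        · rintro rfl; exact ⟨le_refl _, le_refl _, rfl⟩
        · rintro ⟨h1, h2, h3⟩
          have : p.1 = a.1 := by omega
          exact Prod.ext this h3
      · intro w
        rw [Finset.Icc_self, Finset.sum_singleton]
        have hc : cell (fun _ => a.2) (a.1 + a.2) = a := by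
          apply Prod.ext
          · simp [cell]
          · rfl
        rw [hc]
        simp [pathWeight]
    | cons b l' =>
      have hstep : UpStep a b := (List.isChain_cons_cons.mp hchain).1
      have h2 : IsUpRightPath b v (b :: l') := by
        refine ⟨List.cons_ne_nil _ _, rfl, ?_, (List.isChain_cons_cons.mp hchain).2⟩
        rw [← List.getLast?_cons_cons (a := a)]
        exact hlast
      obtain ⟨y', hle, hy0, hy1, hsteps, hmem, hw⟩ := ih b v h2
      have hbsum : b.1 + b.2 = a.1 + a.2 + 1 := by
        rcases hstep with h' | h' <;> (subst h'; simp; ring)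
      refine ⟨fun t => if t = a.1 + a.2 then a.2 else y' t, by omega, by simp, ?_, ?_, ?_, ?_⟩
      · show (if v.1 + v.2 = a.1 + a.2 then a.2 else y' (v.1 + v.2)) = v.2
        rw [if_neg (by omega)]
        exact hy1
      · intro t ht ht'
        show (if t + 1 = a.1 + a.2 then a.2 else y' (t+1)) = (if t = a.1 + a.2 then a.2 else y' t) ∨
          (if t + 1 = a.1 + a.2 then a.2 else y' (t+1)) = (if t = a.1 + a.2 then a.2 else y' t) + 1
        rcases eq_or_lt_of_le ht with heq | hlt
        · subst heq
          rw [if_neg (by omega), if_pos rfl]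
          have hb2 : y' (a.1 + a.2 + 1) = b.2 := by rw [← hbsum]; exact hy0
          rw [hb2]
          rcases hstep with h' | h' <;> (subst h'; simp)
        · rw [if_neg (by omega), if_neg (by omega)]
          exact hsteps t (by omega) (by omega)
      · intro p
        rw [List.mem_cons]
        constructor
        · intro hp'
          rcases hp' with heq | hp
          · have e : p.1 + p.2 = a.1 + a.2 := by rw [heq]
            refine ⟨by omega, by omega, ?_⟩
            show p.2 = (if p.1 + p.2 = a.1 + a.2 then a.2 else y' (p.1 + p.2))
            rw [if_pos e, heq]
          · obtain ⟨h1, h2, h3⟩ := (hmem p).mp hp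
            refine ⟨by omega, by omega, ?_⟩
            show p.2 = (if p.1 + p.2 = a.1 + a.2 then a.2 else y' (p.1 + p.2))
            rw [if_neg (by omega)]; exact h3
        · rintro ⟨h1, h2, h3⟩
          simp only at h3
          rcases eq_or_lt_of_le h1 with heq | hlt
          · left
            rw [if_pos heq.symm] at h3
            have : p.1 = a.1 := by omega
            exact Prod.ext this h3
          · right
            rw [if_neg (by omega)] at h3
            exact (hmem p).mpr ⟨by omega, h2, h3⟩
      · intro w
        have hsplit : Finset.Icc (a.1 + a.2) (v.1 + v.2) =
            insert (a.1 + a.2) (Finset.Icc (a.1 + a.2 + 1) (v.1 + v.2)) := by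
          ext x; simp only [Finset.mem_Icc, Finset.mem_insert]; omega
        rw [hsplit, Finset.sum_insert (by simp [Finset.mem_Icc])]
        have hcell0 : cell (fun t => if t = a.1 + a.2 then a.2 else y' t) (a.1 + a.2) = a := by
          apply Prod.ext
          · simp [cell]
          · simp [cell]
        rw [hcell0]
        have hrest : ∑ t ∈ Finset.Icc (a.1 + a.2 + 1) (v.1 + v.2),
            w (cell (fun t => if t = a.1 + a.2 then a.2 else y' t) t) =
            ∑ t ∈ Finset.Icc (a.1 + a.2 + 1) (v.1 + v.2), w (cell y' t) := by
          refine Finset.sum_congr rfl ?_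
          intro x hx
          simp only [Finset.mem_Icc] at hx
          have : cell (fun t => if t = a.1 + a.2 then a.2 else y' t) x = cell y' x := by
            simp only [cell, if_neg (by omega : ¬ x = a.1 + a.2)]
          rw [this]
        rw [hrest]
        have := hw w
        rw [← hbsum]
        rw [← this]
        simp [pathWeight]


/-- A canonical family of `r` pairwise disjoint up-right paths, path `i` running from
`(1,i)` (time `i+1`) to `(E - e0, e0 + i)` (time `E+i`), described by time functions. -/
def Fam (r E e0 : ℤ) (F : ℤ → ℤ → ℤ) : Prop :=
  (∀ i, 1 ≤ i → i ≤ r → Steps (i+1) (E+i) (F i) ∧ F i (i+1) = i ∧ F i (E+i) = e0 + i) ∧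
  (∀ i j t, 1 ≤ i → i < j → j ≤ r → j+1 ≤ t → t ≤ E+i → F i t ≠ F j t)

namespace Fam

variable {r E e0 : ℤ} {F : ℤ → ℤ → ℤ}

theorem bounds (hF : Fam r E e0 F) {i t : ℤ} (hi : 1 ≤ i) (hir : i ≤ r)
    (ht : i+1 ≤ t) (ht' : t ≤ E+i) :
    i ≤ F i t ∧ F i t ≤ t - 1 ∧ F i t ≤ e0 + i ∧ t - (E - e0) ≤ F i t := by
  obtain ⟨hs, h0, h1⟩ := hF.1 i hi hir
  have b1 := hs.bound (le_refl (i+1)) ht ht'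
  have b2 := hs.bound ht (le_refl t) ht'
  have b3 := hs.bound ht ht' (le_refl (E+i))
  rw [h0] at b1
  rw [h1] at b3
  refine ⟨by omega, by omega, by omega, by omega⟩

theorem order (hF : Fam r E e0 F) {i j t : ℤ} (hi : 1 ≤ i) (hij : i < j) (hjr : j ≤ r)
    (ht : j+1 ≤ t) (ht' : t ≤ E+i) : F i t < F j t := by
  have hir : i ≤ r := by omega
  have key : ∀ s : ℤ, j+1 ≤ s → s ≤ E+i → F i s < F j s := by
    refine Int.le_induction ?_ ?_
    · intro hle
      have hb := hF.bounds hi hir (by omega : i+1 ≤ j+1) hle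
      have h0 := (hF.1 j (by omega) hjr).2.1
      have hne := hF.2 i j (j+1) hi hij hjr (le_refl _) hle
      omega
    · intro s hs ih hle
      have ih' := ih (by omega)
      have hstepi := (hF.1 i hi hir).1 s (by omega) (by omega)
      have hstepj := (hF.1 j (by omega) hjr).1 s (by omega) (by omega)
      have hne := hF.2 i j (s+1) hi hij hjr (by omega) hle
      omega
  exact key t ht ht'

theorem gap (hF : Fam r E e0 F) {i j t : ℤ} (hi : 1 ≤ i) (hij : i ≤ j) (hjr : j ≤ r)
    (ht : j+1 ≤ t) (ht' : t ≤ E+i) : F i t + (j - i) ≤ F j t := by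
  have key : ∀ j' : ℤ, i ≤ j' → j' ≤ r → j'+1 ≤ t → F i t + (j' - i) ≤ F j' t := by
    refine Int.le_induction ?_ ?_
    · intro _ _; omega
    · intro j' hj' ih h1 h2
      have ih' := ih (by omega) (by omega)
      have hord := hF.order (i := j') (j := j'+1) (by omega) (by omega) h1 (by omega)
        (by omega : t ≤ E + j')
      omega
  exact key j hij hjr ht

theorem forced_up (hF : Fam r E e0 F) (hEr : r ≤ E) {i t : ℤ} (h2 : 2 ≤ t) (htr : t ≤ r+1)
    (hi : 1 ≤ i) (hit : i ≤ t-1) : F i t = i := by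
  have htop := (hF.bounds (i := t-1) (t := t) (by omega) (by omega) (by omega) (by omega)).2.1
  have hgap := hF.gap (i := i) (j := t-1) (t := t) hi (by omega) (by omega) (by omega) (by omega)
  have hlb := (hF.bounds (t := t) hi (by omega) (by omega) (by omega : t ≤ E + i)).1
  omega

theorem forced_down (hF : Fam r E e0 F) (hEr : r ≤ E) {i t : ℤ} (ht : E+1 ≤ t) (htr : t ≤ E+r)
    (hi : t-E ≤ i) (hi1 : 1 ≤ i) (hir : i ≤ r) : F i t = e0 + i := by
  have hlb := (hF.bounds (i := t-E) (t := t) (by omega) (by omega) (by omega) (by omega)).2.2.2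
  have hgap := hF.gap (i := t-E) (j := i) (t := t) (by omega) (by omega) (by omega) (by omega) (by omega)
  have hub := (hF.bounds hi1 hir (by omega) (by omega : t ≤ E + i)).2.2.1
  omega

theorem ne' (hF : Fam r E e0 F) {a b t : ℤ} (ha : 1 ≤ a) (hb : 1 ≤ b) (har : a ≤ r)
    (hbr : b ≤ r) (hab : a ≠ b) (hta : a+1 ≤ t) (htA : t ≤ E+a) (htb : b+1 ≤ t)
    (htB : t ≤ E+b) : F a t ≠ F b t := by
  rcases lt_or_gt_of_ne hab with h | h
  · exact hF.2 a b t ha h hbr htb htA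
  · exact fun hh => (hF.2 b a t hb h har hta htB) hh.symm

theorem injOn (hF : Fam r E e0 F) {t lo hi : ℤ} (h1 : 1 ≤ lo) (h2 : hi ≤ r) (h3 : hi ≤ t-1)
    (h4 : t ≤ E + lo) :
    ∀ a ∈ Finset.Icc lo hi, ∀ b ∈ Finset.Icc lo hi, F a t = F b t → a = b := by
  intro a ha b hb heq
  rw [Finset.mem_Icc] at ha hb
  by_contra hne
  rcases lt_or_gt_of_ne hne with hlt | hlt
  · exact absurd heq (ne_of_lt (hF.order (by omega) hlt (by omega) (by omega) (by omega)))
  · exact absurd heq.symm (ne_of_lt (hF.order (by omega) hlt (by omega) (by omega) (by omega)))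

end Fam




theorem sum_shift (f : ℤ → ℕ) (a b c : ℤ) :
    ∑ i ∈ Finset.Icc a b, f (i+c) = ∑ v ∈ Finset.Icc (a+c) (b+c), f v := by
  refine Finset.sum_bij' (fun i _ => i + c) (fun v _ => v - c) ?_ ?_ ?_ ?_ ?_
  · intro x hx; rw [Finset.mem_Icc] at hx
    show x + c ∈ Finset.Icc (a+c) (b+c)
    rw [Finset.mem_Icc]; omega
  · intro x hx; rw [Finset.mem_Icc] at hx
    show x - c ∈ Finset.Icc a b
    rw [Finset.mem_Icc]; omega
  · intro x hx; show x + c - c = x; omega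
  · intro x hx; show x - c + c = x; omega
  · intro x hx; rfl

theorem sum_shift' (f : ℤ → ℕ) (a b a' b' c : ℤ) (ha : a' = a + c) (hb : b' = b + c) :
    ∑ v ∈ Finset.Icc a' b', f v = ∑ i ∈ Finset.Icc a b, f (i+c) := by
  subst ha hb
  exact (sum_shift f a b c).symm

theorem sum_image_le {β : Type*} [DecidableEq β] (s : Finset ℤ) (u : Finset β) (φ : ℤ → β)
    (g : β → ℕ)
    (hinj : ∀ a ∈ s, ∀ b ∈ s, φ a = φ b → a = b)
    (himg : ∀ a ∈ s, φ a ∈ u) :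
    ∑ i ∈ s, g (φ i) ≤ ∑ v ∈ u, g v := by
  rw [← Finset.sum_image hinj]
  apply Finset.sum_le_sum_of_subset
  intro v hv
  obtain ⟨a, ha, rfl⟩ := Finset.mem_image.mp hv
  exact himg a ha

theorem fub (f : ℤ → ℤ → ℕ) (r E T : ℤ) (hr : 1 ≤ r) (hE : 1 ≤ E) (hT : T = E + r) :
    ∑ i ∈ Finset.Icc 1 r, ∑ t ∈ Finset.Icc (i+1) (E+i), f i t
    = ∑ t ∈ Finset.Icc 2 T, ∑ i ∈ Finset.Icc (max 1 (t-E)) (min r (t-1)), f i t := by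
  rw [Finset.sum_sigma', Finset.sum_sigma']
  refine Finset.sum_bij' (fun p _ => (⟨p.2, p.1⟩ : (_ : ℤ) × ℤ))
    (fun p _ => (⟨p.2, p.1⟩ : (_ : ℤ) × ℤ)) ?_ ?_ ?_ ?_ ?_
  · intro p hp
    simp only [Finset.mem_sigma, Finset.mem_Icc, max_le_iff, le_min_iff] at hp ⊢
    omega
  · intro p hp
    simp only [Finset.mem_sigma, Finset.mem_Icc, max_le_iff, le_min_iff] at hp ⊢
    omega
  · intro p hp; rfl
  · intro p hp; rfl
  · intro p hp; rfl

theorem wmaxmin (w : ℤ × ℤ → ℕ) (t a b : ℤ) :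
    w (t - max a b, max a b) + w (t - min a b, min a b) = w (t - a, a) + w (t - b, b) := by
  rcases le_total a b with h | h
  · rw [max_eq_right h, min_eq_left h]; ring
  · rw [max_eq_left h, min_eq_right h]

/-- First new family: upper envelopes. -/
def Cf (m n K : ℤ) (A B : ℤ → ℤ → ℤ) (i t : ℤ) : ℤ :=
  if t ≤ K+1 then i else if t ≤ m+n-K then
    (if i = 1 then A 1 t else max (A i t) (B (i-1) t)) else n-K+i

/-- Second new family: lower envelopes. -/
def Df (m n K : ℤ) (A B : ℤ → ℤ → ℤ) (i t : ℤ) : ℤ :=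
  if t ≤ K+1 then i else if t ≤ m+n-K then
    (if i = K then A (K+1) t else min (A (i+1) t) (B i t)) else n-K+i

section Construction

variable {m n K : ℤ} {A B : ℤ → ℤ → ℤ}

theorem Cf_ramp {i t : ℤ} (h : t ≤ K+1) : Cf m n K A B i t = i := by simp [Cf, h]

theorem Cf_mid1 {t : ℤ} (h1 : ¬ t ≤ K+1) (h2 : t ≤ m+n-K) : Cf m n K A B 1 t = A 1 t := by
  simp [Cf, h1, h2]

theorem Cf_mid {i t : ℤ} (hi : ¬ i = 1) (h1 : ¬ t ≤ K+1) (h2 : t ≤ m+n-K) :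
    Cf m n K A B i t = max (A i t) (B (i-1) t) := by simp [Cf, h1, h2, hi]

theorem Cf_down {i t : ℤ} (h1 : ¬ t ≤ K+1) (h2 : ¬ t ≤ m+n-K) :
    Cf m n K A B i t = n-K+i := by simp [Cf, h1, h2]

theorem Df_ramp {i t : ℤ} (h : t ≤ K+1) : Df m n K A B i t = i := by simp [Df, h]

theorem Df_midK {t : ℤ} (h1 : ¬ t ≤ K+1) (h2 : t ≤ m+n-K) : Df m n K A B K t = A (K+1) t := by
  simp [Df, h1, h2]

theorem Df_mid {i t : ℤ} (hi : ¬ i = K) (h1 : ¬ t ≤ K+1) (h2 : t ≤ m+n-K) :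
    Df m n K A B i t = min (A (i+1) t) (B i t) := by simp [Df, h1, h2, hi]

theorem Df_down {i t : ℤ} (h1 : ¬ t ≤ K+1) (h2 : ¬ t ≤ m+n-K) :
    Df m n K A B i t = n-K+i := by simp [Df, h1, h2]

variable (hK : 2 ≤ K) (hm : K+1 ≤ m) (hn : K+1 ≤ n)
    (hA : Fam (K+1) (m+n-K-1) (n-K-1) A) (hB : Fam (K-1) (m+n-K+1) (n-K+1) B)

include hK hm hn hA hB

theorem famC : Fam K (m+n-K) (n-K) (Cf m n K A B) := by
  have hErA : K+1 ≤ m+n-K-1 := by omega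
  have hErB : K-1 ≤ m+n-K+1 := by omega
  constructor
  · intro i hi hiK
    refine ⟨?_, Cf_ramp (by omega), Cf_down (by omega) (by omega)⟩
    intro t ht ht'
    by_cases c1 : t + 1 ≤ K + 1
    · rw [Cf_ramp (t := t) (by omega), Cf_ramp (t := t+1) (by omega)]; left; rfl
    by_cases c2 : t ≤ K + 1
    · -- t = K+1, t+1 = K+2 is in the middle regime
      rw [Cf_ramp (t := t) (by omega)]
      by_cases hi1 : i = 1
      · rw [hi1, Cf_mid1 (t := t+1) (by omega) (by omega)]
        have hf : A 1 (t+1) = 1 := hA.forced_up hErA (by omega) (by omega) (by omega) (by omega)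
        rw [hf]; omega
      · rw [Cf_mid (t := t+1) hi1 (by omega) (by omega)]
        have hfA : A i (t+1) = i := hA.forced_up hErA (by omega) (by omega) (by omega) (by omega)
        have hfB0 : B (i-1) K = i-1 :=
          hB.forced_up hErB (by omega) (by omega) (by omega) (by omega)
        have hsB := ((hB.1 (i-1) (by omega) (by omega)).1).bound (s := K) (t := t+1)
          (by omega) (by omega) (by omega)
        have h1 := le_max_left (A i (t+1)) (B (i-1) (t+1))
        have h2 := le_max_right (A i (t+1)) (B (i-1) (t+1))
        have h3 := max_choice (A i (t+1)) (B (i-1) (t+1))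
        omega
    by_cases c4 : t + 1 ≤ m+n-K
    · -- middle to middle
      by_cases hi1 : i = 1
      · rw [hi1, Cf_mid1 (t := t) (by omega) (by omega), Cf_mid1 (t := t+1) (by omega) (by omega)]
        exact (hA.1 1 (by omega) (by omega)).1 t (by omega) (by omega)
      · rw [Cf_mid (t := t) hi1 (by omega) (by omega),
          Cf_mid (t := t+1) hi1 (by omega) (by omega)]
        have hsA := (hA.1 i (by omega) (by omega)).1 t (by omega) (by omega)
        have hsB := (hB.1 (i-1) (by omega) (by omega)).1 t (by omega) (by omega)
        have h1 := le_max_left (A i (t+1)) (B (i-1) (t+1))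
        have h2 := le_max_right (A i (t+1)) (B (i-1) (t+1))
        have h3 := max_choice (A i (t+1)) (B (i-1) (t+1))
        have h4 := le_max_left (A i t) (B (i-1) t)
        have h5 := le_max_right (A i t) (B (i-1) t)
        have h6 := max_choice (A i t) (B (i-1) t)
        omega
    by_cases c5 : t ≤ m+n-K
    · -- t = m+n-K, t+1 in the final regime
      rw [Cf_down (t := t+1) (by omega) (by omega)]
      by_cases hi1 : i = 1
      · rw [hi1, Cf_mid1 (t := t) (by omega) (by omega)]
        have hlA : A 1 t = n-K := by
          have h0 := (hA.1 1 (by omega) (by omega)).2.2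
          have ht5 : t = m+n-K-1+1 := by omega
          rw [ht5, h0]; omega
        omega
      · rw [Cf_mid (t := t) hi1 (by omega) (by omega)]
        have hfA : A i t = n-K-1+i :=
          hA.forced_down hErA (by omega) (by omega) (by omega) (by omega) (by omega)
        have hubB := (hB.bounds (i := i-1) (t := t) (by omega) (by omega) (by omega)
          (by omega)).2.2.1
        have h4 := le_max_left (A i t) (B (i-1) t)
        have h5 := le_max_right (A i t) (B (i-1) t)
        have h6 := max_choice (A i t) (B (i-1) t)
        omega
    · rw [Cf_down (t := t) (by omega) (by omega), Cf_down (t := t+1) (by omega) (by omega)]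
      left; rfl
  · intro i j t hi hij hjK ht ht'
    by_cases c2 : t ≤ K+1
    · rw [Cf_ramp (t := t) c2, Cf_ramp (t := t) c2]; omega
    by_cases c5 : t ≤ m+n-K
    · have hAo : A i t < A j t := hA.order (by omega) (by omega) (by omega) (by omega)
        (by omega : t ≤ m+n-K-1+i)
      have h4 := le_max_left (A j t) (B (j-1) t)
      have h5 := le_max_right (A j t) (B (j-1) t)
      have h6 := max_choice (A j t) (B (j-1) t)
      rw [Cf_mid (i := j) (t := t) (by omega) (by omega) (by omega)]
      by_cases hi1 : i = 1
      · rw [hi1, Cf_mid1 (t := t) (by omega) (by omega)]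
        rw [hi1] at hAo
        omega
      · rw [Cf_mid (t := t) hi1 (by omega) (by omega)]
        have hBo : B (i-1) t < B (j-1) t := hB.order (by omega) (by omega) (by omega)
          (by omega) (by omega : t ≤ m+n-K+1+(i-1))
        have h7 := le_max_left (A i t) (B (i-1) t)
        have h8 := le_max_right (A i t) (B (i-1) t)
        have h9 := max_choice (A i t) (B (i-1) t)
        omega
    · rw [Cf_down (t := t) (by omega) (by omega), Cf_down (t := t) (by omega) (by omega)]
      omega

theorem famD : Fam K (m+n-K) (n-K) (Df m n K A B) := by
  have hErA : K+1 ≤ m+n-K-1 := by omega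
  have hErB : K-1 ≤ m+n-K+1 := by omega
  constructor
  · intro i hi hiK
    refine ⟨?_, Df_ramp (by omega), Df_down (by omega) (by omega)⟩
    intro t ht ht'
    by_cases c1 : t + 1 ≤ K + 1
    · rw [Df_ramp (t := t) (by omega), Df_ramp (t := t+1) (by omega)]; left; rfl
    by_cases c2 : t ≤ K + 1
    · rw [Df_ramp (t := t) (by omega)]
      by_cases hiK' : i = K
      · rw [hiK', Df_midK (t := t+1) (by omega) (by omega)]
        have hf : A (K+1) (t+1) = K+1 :=
          hA.forced_up hErA (by omega) (by omega) (by omega) (by omega)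
        rw [hf]; omega
      · rw [Df_mid (t := t+1) hiK' (by omega) (by omega)]
        have hfA : A (i+1) (t+1) = i+1 :=
          hA.forced_up hErA (by omega) (by omega) (by omega) (by omega)
        have hfB0 : B i K = i := hB.forced_up hErB (by omega) (by omega) (by omega) (by omega)
        have hsB := ((hB.1 i (by omega) (by omega)).1).bound (s := K) (t := t+1)
          (by omega) (by omega) (by omega)
        have h1 := min_le_left (A (i+1) (t+1)) (B i (t+1))
        have h2 := min_le_right (A (i+1) (t+1)) (B i (t+1))
        have h3 := min_choice (A (i+1) (t+1)) (B i (t+1))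
        omega
    by_cases c4 : t + 1 ≤ m+n-K
    · by_cases hiK' : i = K
      · rw [hiK', Df_midK (t := t) (by omega) (by omega), Df_midK (t := t+1) (by omega) (by omega)]
        exact (hA.1 (K+1) (by omega) (by omega)).1 t (by omega) (by omega)
      · rw [Df_mid (t := t) hiK' (by omega) (by omega),
          Df_mid (t := t+1) hiK' (by omega) (by omega)]
        have hsA := (hA.1 (i+1) (by omega) (by omega)).1 t (by omega) (by omega)
        have hsB := (hB.1 i (by omega) (by omega)).1 t (by omega) (by omega)
        have h1 := min_le_left (A (i+1) (t+1)) (B i (t+1))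
        have h2 := min_le_right (A (i+1) (t+1)) (B i (t+1))
        have h3 := min_choice (A (i+1) (t+1)) (B i (t+1))
        have h4 := min_le_left (A (i+1) t) (B i t)
        have h5 := min_le_right (A (i+1) t) (B i t)
        have h6 := min_choice (A (i+1) t) (B i t)
        omega
    by_cases c5 : t ≤ m+n-K
    · rw [Df_down (t := t+1) (by omega) (by omega)]
      by_cases hiK' : i = K
      · rw [hiK', Df_midK (t := t) (by omega) (by omega)]
        have hfA : A (K+1) t = n :=  by
          have := hA.forced_down hErA (by omega) (by omega) (by omega : t-(m+n-K-1) ≤ K+1)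
            (by omega) (by omega)
          omega
        omega
      · rw [Df_mid (t := t) hiK' (by omega) (by omega)]
        have hfA : A (i+1) t = n-K+i := by
          have := hA.forced_down hErA (by omega) (by omega) (by omega : t-(m+n-K-1) ≤ i+1)
            (by omega) (by omega)
          omega
        have hlbB1 := (hB.bounds (i := 1) (t := t) (by omega) (by omega) (by omega)
          (by omega)).2.2.2
        have hgapB := hB.gap (i := 1) (j := i) (t := t) (by omega) (by omega) (by omega)
          (by omega) (by omega)
        have h4 := min_le_left (A (i+1) t) (B i t)
        have h5 := min_le_right (A (i+1) t) (B i t)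
        have h6 := min_choice (A (i+1) t) (B i t)
        omega
    · rw [Df_down (t := t) (by omega) (by omega), Df_down (t := t+1) (by omega) (by omega)]
      left; rfl
  · intro i j t hi hij hjK ht ht'
    by_cases c2 : t ≤ K+1
    · rw [Df_ramp (t := t) c2, Df_ramp (t := t) c2]; omega
    by_cases c5 : t ≤ m+n-K
    · have hAo : A (i+1) t < A (j+1) t := hA.order (by omega) (by omega) (by omega) (by omega)
        (by omega : t ≤ m+n-K-1+(i+1))
      have h4 := min_le_left (A (i+1) t) (B i t)
      have h5 := min_le_right (A (i+1) t) (B i t)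
      have h6 := min_choice (A (i+1) t) (B i t)
      rw [Df_mid (i := i) (t := t) (by omega) (by omega) (by omega)]
      by_cases hjK' : j = K
      · rw [hjK', Df_midK (t := t) (by omega) (by omega)]
        rw [hjK'] at hAo
        omega
      · rw [Df_mid (i := j) (t := t) hjK' (by omega) (by omega)]
        have hBo : B i t < B j t := hB.order (by omega) (by omega) (by omega)
          (by omega) (by omega : t ≤ m+n-K+1+i)
        have h7 := min_le_left (A (j+1) t) (B j t)
        have h8 := min_le_right (A (j+1) t) (B j t)
        have h9 := min_choice (A (j+1) t) (B j t)
        omega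
    · rw [Df_down (t := t) (by omega) (by omega), Df_down (t := t) (by omega) (by omega)]
      omega

theorem weightCD (w : ℤ × ℤ → ℕ) :
    (∑ i ∈ Finset.Icc 1 (K+1), ∑ t ∈ Finset.Icc (i+1) ((m+n-K-1)+i), w (cell (A i) t)) +
    (∑ i ∈ Finset.Icc 1 (K-1), ∑ t ∈ Finset.Icc (i+1) ((m+n-K+1)+i), w (cell (B i) t)) ≤
    (∑ i ∈ Finset.Icc 1 K, ∑ t ∈ Finset.Icc (i+1) ((m+n-K)+i), w (cell (Cf m n K A B i) t)) +
    (∑ i ∈ Finset.Icc 1 K, ∑ t ∈ Finset.Icc (i+1) ((m+n-K)+i), w (cell (Df m n K A B i) t)) := by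
  rw [fub (fun i t => w (cell (A i) t)) (K+1) (m+n-K-1) (m+n) (by omega) (by omega) (by omega)]
  rw [fub (fun i t => w (cell (B i) t)) (K-1) (m+n-K+1) (m+n) (by omega) (by omega) (by omega)]
  rw [fub (fun i t => w (cell (Cf m n K A B i) t)) K (m+n-K) (m+n) (by omega) (by omega)
    (by omega)]
  rw [fub (fun i t => w (cell (Df m n K A B i) t)) K (m+n-K) (m+n) (by omega) (by omega)
    (by omega)]
  rw [← Finset.sum_add_distrib, ← Finset.sum_add_distrib]
  apply Finset.sum_le_sum
  intro t ht
  rw [Finset.mem_Icc] at ht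
  by_cases c2 : t ≤ K+1
  · -- ramp-up regime
    have eIA : Finset.Icc (max 1 (t-(m+n-K-1))) (min (K+1) (t-1)) = Finset.Icc 1 (t-1) := by
      rw [max_eq_left (by omega), min_eq_right (by omega)]
    have eIB : Finset.Icc (max 1 (t-(m+n-K+1))) (min (K-1) (t-1))
        = Finset.Icc 1 (min (K-1) (t-1)) := by
      rw [max_eq_left (by omega)]
    have eIC : Finset.Icc (max 1 (t-(m+n-K))) (min K (t-1)) = Finset.Icc 1 (t-1) := by
      rw [max_eq_left (by omega), min_eq_right (by omega)]
    rw [eIA, eIB, eIC]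
    have hCcell : ∀ v ∈ Finset.Icc (1:ℤ) (t-1),
        w (cell (Cf m n K A B v) t) = w (t - v, v) := by
      intro v hv
      simp only [cell, Cf_ramp c2]
    have hDcell : ∀ v ∈ Finset.Icc (1:ℤ) (t-1),
        w (cell (Df m n K A B v) t) = w (t - v, v) := by
      intro v hv
      simp only [cell, Df_ramp c2]
    rw [Finset.sum_congr rfl hCcell, Finset.sum_congr rfl hDcell]
    apply add_le_add
    · exact sum_image_le _ _ (fun i => A i t) (fun v => w (t - v, v))
        (hA.injOn (by omega) (by omega) (by omega) (by omega))
        (fun a ha => by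
          rw [Finset.mem_Icc] at ha
          have hb := hA.bounds (i := a) (t := t) (by omega) (by omega) (by omega) (by omega)
          show A a t ∈ Finset.Icc 1 (t-1)
          rw [Finset.mem_Icc]; omega)
    · exact sum_image_le _ _ (fun i => B i t) (fun v => w (t - v, v))
        (hB.injOn (by omega) (min_le_left _ _) (min_le_right _ _) (by omega))
        (fun a ha => by
          rw [Finset.mem_Icc, le_min_iff] at ha
          have hb := hB.bounds (i := a) (t := t) (by omega) (by omega) (by omega)
            (by omega)
          show B a t ∈ Finset.Icc 1 (t-1)
          rw [Finset.mem_Icc]; omega)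
  · by_cases c5 : t ≤ m+n-K
    · -- middle regime
      have eIA : Finset.Icc (max 1 (t-(m+n-K-1))) (min (K+1) (t-1)) = Finset.Icc 1 (K+1) := by
        rw [max_eq_left (by omega), min_eq_left (by omega)]
      have eIB : Finset.Icc (max 1 (t-(m+n-K+1))) (min (K-1) (t-1)) = Finset.Icc 1 (K-1) := by
        rw [max_eq_left (by omega), min_eq_left (by omega)]
      have eIC : Finset.Icc (max 1 (t-(m+n-K))) (min K (t-1)) = Finset.Icc 1 K := by
        rw [max_eq_left (by omega), min_eq_left (by omega)]
      rw [eIA, eIB, eIC]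
      have hsplitC : Finset.Icc (1:ℤ) K = insert 1 (Finset.Icc 2 K) := by
        ext x; rw [Finset.mem_insert, Finset.mem_Icc, Finset.mem_Icc]; omega
      have hsplitD : Finset.Icc (1:ℤ) K = insert K (Finset.Icc 1 (K-1)) := by
        ext x; rw [Finset.mem_insert, Finset.mem_Icc, Finset.mem_Icc]; omega
      have hsplitA : Finset.Icc (1:ℤ) (K+1) = insert 1 (insert (K+1) (Finset.Icc 2 K)) := by
        ext x
        rw [Finset.mem_insert, Finset.mem_insert, Finset.mem_Icc, Finset.mem_Icc]; omega
      have hCsum : ∑ i ∈ Finset.Icc (1:ℤ) K, w (cell (Cf m n K A B i) t)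
          = w (cell (A 1) t)
            + ∑ i ∈ Finset.Icc (1:ℤ) (K-1), w (cell (Cf m n K A B (i+1)) t) := by
        rw [hsplitC, Finset.sum_insert (by rw [Finset.mem_Icc]; omega)]
        congr 1
        · simp only [cell, Cf_mid1 (K := K) c2 c5]
        · exact sum_shift' (fun i => w (cell (Cf m n K A B i) t)) 1 (K-1) 2 K 1
            (by ring) (by ring)
      have hDsum : ∑ i ∈ Finset.Icc (1:ℤ) K, w (cell (Df m n K A B i) t)
          = w (cell (A (K+1)) t)
            + ∑ i ∈ Finset.Icc (1:ℤ) (K-1), w (cell (Df m n K A B i) t) := by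
        rw [hsplitD, Finset.sum_insert (by rw [Finset.mem_Icc]; omega)]
        congr 1
        simp only [cell, Df_midK (K := K) c2 c5]
      have hAsum : ∑ i ∈ Finset.Icc (1:ℤ) (K+1), w (cell (A i) t)
          = w (cell (A 1) t) + (w (cell (A (K+1)) t)
            + ∑ i ∈ Finset.Icc (1:ℤ) (K-1), w (cell (A (i+1)) t)) := by
        rw [hsplitA, Finset.sum_insert (by
            rw [Finset.mem_insert, Finset.mem_Icc]; omega),
          Finset.sum_insert (by rw [Finset.mem_Icc]; omega)]
        congr 2
        exact sum_shift' (fun i => w (cell (A i) t)) 1 (K-1) 2 K 1 (by ring) (by ring)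
      rw [hCsum, hDsum, hAsum]
      have hpt : ∀ i ∈ Finset.Icc (1:ℤ) (K-1),
          w (cell (Cf m n K A B (i+1)) t) + w (cell (Df m n K A B i) t)
          = w (cell (A (i+1)) t) + w (cell (B i) t) := by
        intro i hi
        rw [Finset.mem_Icc] at hi
        have hC : Cf m n K A B (i+1) t = max (A (i+1) t) (B i t) := by
          rw [Cf_mid (by omega) c2 c5, show (i+1-1 : ℤ) = i from by ring]
        have hD : Df m n K A B i t = min (A (i+1) t) (B i t) :=
          Df_mid (by omega) c2 c5
        simp only [cell, hC, hD]
        exact wmaxmin w t (A (i+1) t) (B i t)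
      have hmerge : (∑ i ∈ Finset.Icc (1:ℤ) (K-1), w (cell (Cf m n K A B (i+1)) t))
          + (∑ i ∈ Finset.Icc (1:ℤ) (K-1), w (cell (Df m n K A B i) t))
          = (∑ i ∈ Finset.Icc (1:ℤ) (K-1), w (cell (A (i+1)) t))
          + (∑ i ∈ Finset.Icc (1:ℤ) (K-1), w (cell (B i) t)) := by
        rw [← Finset.sum_add_distrib, ← Finset.sum_add_distrib]
        exact Finset.sum_congr rfl hpt
      omega
    · -- ramp-down regime
      have eIA : Finset.Icc (max 1 (t-(m+n-K-1))) (min (K+1) (t-1))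
          = Finset.Icc (t-(m+n-K-1)) (K+1) := by
        rw [max_eq_right (by omega), min_eq_left (by omega)]
      have eIB : Finset.Icc (max 1 (t-(m+n-K+1))) (min (K-1) (t-1))
          = Finset.Icc (max 1 (t-(m+n-K+1))) (K-1) := by
        rw [min_eq_left (by omega)]
      have eIC : Finset.Icc (max 1 (t-(m+n-K))) (min K (t-1))
          = Finset.Icc (t-(m+n-K)) K := by
        rw [max_eq_right (by omega), min_eq_left (by omega)]
      rw [eIA, eIB, eIC]
      have hCcell : ∀ i ∈ Finset.Icc (t-(m+n-K)) K,
          w (cell (Cf m n K A B i) t) = w (t - (i+(n-K)), i+(n-K)) := by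
        intro i hi
        have hv : Cf m n K A B i t = i + (n-K) := by
          rw [Cf_down c2 c5]; ring
        simp only [cell, hv]
      have hDcell : ∀ i ∈ Finset.Icc (t-(m+n-K)) K,
          w (cell (Df m n K A B i) t) = w (t - (i+(n-K)), i+(n-K)) := by
        intro i hi
        have hv : Df m n K A B i t = i + (n-K) := by
          rw [Df_down c2 c5]; ring
        simp only [cell, hv]
      have hCtrans : ∑ i ∈ Finset.Icc (t-(m+n-K)) K, w (cell (Cf m n K A B i) t)
          = ∑ v ∈ Finset.Icc (t-m) n, w (t - v, v) := by
        rw [Finset.sum_congr rfl hCcell]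
        exact (sum_shift' (fun v => w (t - v, v)) (t-(m+n-K)) K (t-m) n (n-K)
          (by ring) (by ring)).symm
      have hDtrans : ∑ i ∈ Finset.Icc (t-(m+n-K)) K, w (cell (Df m n K A B i) t)
          = ∑ v ∈ Finset.Icc (t-m) n, w (t - v, v) := by
        rw [Finset.sum_congr rfl hDcell]
        exact (sum_shift' (fun v => w (t - v, v)) (t-(m+n-K)) K (t-m) n (n-K)
          (by ring) (by ring)).symm
      rw [hCtrans, hDtrans]
      apply add_le_add
      · exact sum_image_le _ _ (fun i => A i t) (fun v => w (t - v, v))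
          (hA.injOn (by omega) (by omega) (by omega) (by omega))
          (fun a ha => by
            rw [Finset.mem_Icc] at ha
            have hb := hA.bounds (i := a) (t := t) (by omega) (by omega) (by omega) (by omega)
            show A a t ∈ Finset.Icc (t-m) n
            rw [Finset.mem_Icc]; omega)
      · exact sum_image_le _ _ (fun i => B i t) (fun v => w (t - v, v))
          (hB.injOn (le_max_left _ _) (by omega) (by omega) (by omega))
          (fun a ha => by
            rw [Finset.mem_Icc, max_le_iff] at ha
            have hb := hB.bounds (i := a) (t := t) (by omega) (by omega) (by omega) (by omega)
            show B a t ∈ Finset.Icc (t-m) n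
            rw [Finset.mem_Icc]; omega)

end Construction


theorem fin_sum_icc (j : ℕ) (f : ℤ → ℕ) :
    ∑ i0 : Fin j, f ((i0:ℤ)+1) = ∑ i ∈ Finset.Icc 1 (j:ℤ), f i := by
  rw [Fin.sum_univ_eq_sum_range (fun i0 => f ((i0:ℤ)+1)) j]
  refine Finset.sum_bij' (fun (i0 : ℕ) (_ : i0 ∈ Finset.range j) => (i0:ℤ)+1)
    (fun (i : ℤ) (_ : i ∈ Finset.Icc 1 (j:ℤ)) => (i-1).toNat) ?_ ?_ ?_ ?_ ?_
  · intro a ha; rw [Finset.mem_range] at ha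
    show (a:ℤ)+1 ∈ Finset.Icc 1 (j:ℤ)
    rw [Finset.mem_Icc]; omega
  · intro a ha; rw [Finset.mem_Icc] at ha
    show (a-1).toNat ∈ Finset.range j
    rw [Finset.mem_range]; omega
  · intro a ha; rw [Finset.mem_range] at ha
    show (((a:ℤ)+1-1).toNat : ℕ) = a
    omega
  · intro a ha; rw [Finset.mem_Icc] at ha
    show (((a-1).toNat : ℤ)+1 : ℤ) = a
    omega
  · intro a ha; rfl

/-- The canonical staircase path family, used for nonemptiness. -/
def wit (m' e0 i t : ℤ) : ℤ := max i (min (t - m' + i - 1) (e0 + i))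

theorem witnessFam (r E e0 m' : ℤ) (hr : 1 ≤ r) (hrm : r ≤ m') (he0 : 0 ≤ e0)
    (hE : E = e0 + m') :
    Fam r E e0 (wit m' e0) := by
  constructor
  · intro i hi hir
    refine ⟨?_, ?_, ?_⟩
    · intro t _ _
      unfold wit
      have a1 := max_choice i (min (t - m' + i - 1) (e0 + i))
      have a2 := max_choice i (min (t + 1 - m' + i - 1) (e0 + i))
      have a3 := min_choice (t - m' + i - 1) (e0 + i)
      have a4 := min_choice (t + 1 - m' + i - 1) (e0 + i)
      have b1 := le_max_left i (min (t - m' + i - 1) (e0 + i))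
      have b2 := le_max_left i (min (t + 1 - m' + i - 1) (e0 + i))
      have c1 := min_le_left (t - m' + i - 1) (e0 + i)
      have c2 := min_le_left (t + 1 - m' + i - 1) (e0 + i)
      have c3 := min_le_right (t - m' + i - 1) (e0 + i)
      have c4 := min_le_right (t + 1 - m' + i - 1) (e0 + i)
      omega
    · unfold wit
      have c1 := min_le_left (i + 1 - m' + i - 1) (e0 + i)
      have a1 := max_choice i (min (i + 1 - m' + i - 1) (e0 + i))
      have b1 := le_max_left i (min (i + 1 - m' + i - 1) (e0 + i))
      omega
    · unfold wit
      have h1 : min (E + i - m' + i - 1) (e0 + i) = e0 + i := min_eq_right (by omega)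
      rw [h1]
      exact max_eq_right (by omega)
  · intro i j t hi hij hjr _ _
    unfold wit
    have a1 := max_choice i (min (t - m' + i - 1) (e0 + i))
    have a2 := max_choice j (min (t - m' + j - 1) (e0 + j))
    have b1 := le_max_left j (min (t - m' + j - 1) (e0 + j))
    have b2 := le_max_right j (min (t - m' + j - 1) (e0 + j))
    have c1 := min_le_left (t - m' + i - 1) (e0 + i)
    have c2 := min_le_right (t - m' + i - 1) (e0 + i)
    have c3 := min_choice (t - m' + j - 1) (e0 + j)
    have c4 := min_choice (t - m' + i - 1) (e0 + i)
    omega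


theorem fam_to_tuple (w : ℤ × ℤ → ℕ) (j : ℕ) (m e0 : ℤ) (hE1 : 1 ≤ e0 + m)
    (F : ℤ → ℤ → ℤ) (hF : Fam (j:ℤ) (e0+m) e0 F) :
    ∃ π : Fin j → List (ℤ × ℤ),
      (∀ i0 : Fin j, IsUpRightPath (1, (i0:ℤ)+1) (m, e0 + (i0:ℤ) + 1) (π i0)) ∧
      (∀ i0 j0 : Fin j, i0 ≠ j0 → ∀ v, v ∈ π i0 → v ∉ π j0) ∧
      ∑ i0 : Fin j, pathWeight w (π i0) =
        ∑ i ∈ Finset.Icc 1 (j:ℤ), ∑ t ∈ Finset.Icc (i+1) ((e0+m)+i), w (cell (F i) t) := by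
  refine ⟨fun i0 => cells (((i0:ℤ)+1)+1) ((e0+m)+((i0:ℤ)+1)) (F ((i0:ℤ)+1)), ?_, ?_, ?_⟩
  · intro i0
    have hlt := i0.isLt
    have hi1 : 1 ≤ (i0:ℤ)+1 := by omega
    have hir : (i0:ℤ)+1 ≤ (j:ℤ) := by omega
    obtain ⟨hsteps, hinit, hlast⟩ := hF.1 ((i0:ℤ)+1) hi1 hir
    have h := isUpRightPath_cells (t0 := ((i0:ℤ)+1)+1) (t1 := (e0+m)+((i0:ℤ)+1))
      (by omega) hsteps
    rw [hinit, hlast] at h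
    rw [show ((i0:ℤ)+1+1) - ((i0:ℤ)+1) = 1 from by ring,
      show ((e0+m)+((i0:ℤ)+1)) - (e0 + ((i0:ℤ)+1)) = m from by ring] at h
    rw [show e0 + (i0:ℤ) + 1 = e0 + ((i0:ℤ)+1) from by ring]
    exact h
  · intro i0 j0 hne v hvi hvj
    rw [mem_cells] at hvi hvj
    obtain ⟨h1, h2, h3⟩ := hvi
    obtain ⟨h4, h5, h6⟩ := hvj
    have hlt := i0.isLt
    have hlt' := j0.isLt
    have hne2 : ((i0:ℤ)+1) ≠ ((j0:ℤ)+1) := by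
      intro hh
      exact hne (Fin.ext (by omega))
    exact hF.ne' (by omega) (by omega) (by omega) (by omega) hne2
      h1 h2 h4 h5 (by rw [← h3, ← h6])
  · rw [← fin_sum_icc j (fun i => ∑ t ∈ Finset.Icc (i+1) ((e0+m)+i), w (cell (F i) t))]
    apply Finset.sum_congr rfl
    intro i0 _
    exact pathWeight_cells w (F ((i0:ℤ)+1)) (by omega)

theorem tuple_to_fam (w : ℤ × ℤ → ℕ) (j : ℕ) (m e0 : ℤ) (π : Fin j → List (ℤ × ℤ))
    (hπ : ∀ i0 : Fin j, IsUpRightPath (1, (i0:ℤ)+1) (m, e0 + (i0:ℤ) + 1) (π i0))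
    (hdisj : ∀ i0 j0 : Fin j, i0 ≠ j0 → ∀ v, v ∈ π i0 → v ∉ π j0) :
    ∃ F : ℤ → ℤ → ℤ, Fam (j:ℤ) (e0+m) e0 F ∧
      ∑ i0 : Fin j, pathWeight w (π i0) =
        ∑ i ∈ Finset.Icc 1 (j:ℤ), ∑ t ∈ Finset.Icc (i+1) ((e0+m)+i), w (cell (F i) t) := by
  classical
  have hext := fun i0 : Fin j => extract (π i0) _ _ (hπ i0)
  choose Y hle hY0 hY1 hSteps hmem hw using hext
  have e1 : ∀ i0 : Fin j, ((1:ℤ), (i0:ℤ)+1).1 + ((1:ℤ), (i0:ℤ)+1).2 = ((i0:ℤ)+1)+1 := by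
    intro i0; show (1:ℤ) + ((i0:ℤ)+1) = ((i0:ℤ)+1)+1; ring
  have e2 : ∀ i0 : Fin j, (m, e0 + (i0:ℤ) + 1).1 + (m, e0 + (i0:ℤ) + 1).2
      = (e0+m) + ((i0:ℤ)+1) := by
    intro i0; show m + (e0 + (i0:ℤ) + 1) = (e0+m) + ((i0:ℤ)+1); ring
  refine ⟨fun i t => if h : 1 ≤ i ∧ i ≤ (j:ℤ) then Y ⟨(i-1).toNat, by omega⟩ t else 0, ?_, ?_⟩
  · constructor
    · intro i hi1 hir
      have hidx : ((i-1).toNat) < j := by omega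
      have hFval : ∀ t, (fun i t => if h : 1 ≤ i ∧ i ≤ (j:ℤ) then
          Y ⟨(i-1).toNat, by omega⟩ t else 0) i t = Y ⟨(i-1).toNat, hidx⟩ t := by
        intro t; exact dif_pos ⟨hi1, hir⟩
      set i0 : Fin j := ⟨(i-1).toNat, hidx⟩ with hi0
      have hcast : (i0:ℤ) = i - 1 := by
        show (((i-1).toNat : ℕ) : ℤ) = i - 1
        omega
      refine ⟨?_, ?_, ?_⟩
      · intro t ht ht'
        rw [hFval, hFval]
        have hs := hSteps i0
        rw [e1 i0, e2 i0] at hs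
        exact hs t (by omega) (by omega)
      · rw [hFval]
        have h0 := hY0 i0
        rw [e1 i0] at h0
        rw [show i + 1 = ((i0:ℤ)+1)+1 from by omega, h0]
        show (i0:ℤ)+1 = i
        omega
      · rw [hFval]
        have h0 := hY1 i0
        rw [e2 i0] at h0
        rw [show (e0+m) + i = (e0+m)+((i0:ℤ)+1) from by omega, h0]
        show e0 + (i0:ℤ) + 1 = e0 + i
        omega
    · intro a b t ha hab hbr hta htA
      have hidxa : ((a-1).toNat) < j := by omega
      have hidxb : ((b-1).toNat) < j := by omega
      set a0 : Fin j := ⟨(a-1).toNat, hidxa⟩ with ha0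
      set b0 : Fin j := ⟨(b-1).toNat, hidxb⟩ with hb0
      have hcasta : (a0:ℤ) = a - 1 := by
        show (((a-1).toNat : ℕ) : ℤ) = a - 1
        omega
      have hcastb : (b0:ℤ) = b - 1 := by
        show (((b-1).toNat : ℕ) : ℤ) = b - 1
        omega
      have hFa : ∀ s, (fun i t => if h : 1 ≤ i ∧ i ≤ (j:ℤ) then
          Y ⟨(i-1).toNat, by omega⟩ t else 0) a s = Y a0 s := by
        intro s; exact dif_pos ⟨by omega, by omega⟩
      have hFb : ∀ s, (fun i t => if h : 1 ≤ i ∧ i ≤ (j:ℤ) then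
          Y ⟨(i-1).toNat, by omega⟩ t else 0) b s = Y b0 s := by
        intro s; exact dif_pos ⟨by omega, by omega⟩
      rw [hFa, hFb]
      intro heq
      have hvmem : (t - Y a0 t, Y a0 t) ∈ π a0 := by
        rw [(hmem a0) _]
        rw [e1 a0, e2 a0]
        refine ⟨by simp only; omega, by simp only; omega, ?_⟩
        simp only
        rw [show t - Y a0 t + Y a0 t = t from by ring]
      have hvmem' : (t - Y a0 t, Y a0 t) ∈ π b0 := by
        rw [(hmem b0) _]
        rw [e1 b0, e2 b0]
        refine ⟨by simp only; omega, by simp only; omega, ?_⟩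
        simp only
        rw [show t - Y a0 t + Y a0 t = t from by ring, heq]
      exact hdisj a0 b0 (by
        intro hh
        have : (a0:ℤ) = (b0:ℤ) := by rw [hh]
        omega) _ hvmem hvmem'
  · rw [← fin_sum_icc j (fun i => ∑ t ∈ Finset.Icc (i+1) ((e0+m)+i),
      w (cell ((fun i t => if h : 1 ≤ i ∧ i ≤ (j:ℤ) then Y ⟨(i-1).toNat, by omega⟩ t else 0) i) t))]
    apply Finset.sum_congr rfl
    intro i0 _
    have hlt := i0.isLt
    have hw' := hw i0 w
    rw [e1 i0, e2 i0] at hw'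
    rw [hw']
    apply Finset.sum_congr rfl
    intro t _
    have hidx : ((((i0:ℤ)+1)-1).toNat) < j := by omega
    have hival : (⟨(((i0:ℤ)+1)-1).toNat, hidx⟩ : Fin j) = i0 := by
      apply Fin.ext
      show ((((i0:ℤ)+1)-1).toNat : ℕ) = (i0 : ℕ)
      omega
    have hFv : (fun i t => if h : 1 ≤ i ∧ i ≤ (j:ℤ) then Y ⟨(i-1).toNat, by omega⟩ t else 0)
        ((i0:ℤ)+1) t = Y i0 t := by
      show (if h : 1 ≤ (i0:ℤ)+1 ∧ (i0:ℤ)+1 ≤ (j:ℤ) then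
        Y ⟨(((i0:ℤ)+1)-1).toNat, by omega⟩ t else 0) = Y i0 t
      rw [dif_pos ⟨by omega, by omega⟩]
      congr 1
    simp only [cell, hFv]


theorem bddAboveSet (w : ℤ × ℤ → ℕ) (m n : ℤ) (j : ℕ) (hn : 1 ≤ n) :
    BddAbove {S : ℕ | ∃ π : Fin j → List (ℤ × ℤ),
      (∀ i : Fin j, IsUpRightPath (1, (i : ℤ) + 1) (m, n - (j : ℤ) + (i : ℤ) + 1) (π i)) ∧
      (∀ i i' : Fin j, i ≠ i' → ∀ v, v ∈ π i → v ∉ π i') ∧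
      S = ∑ i : Fin j, pathWeight w (π i)} := by
  refine ⟨j * (∑ p ∈ Finset.Icc ((1:ℤ),(1:ℤ)) (m,n), w p), ?_⟩
  rintro S ⟨π, hπ, -, rfl⟩
  have hpath : ∀ i0 : Fin j, pathWeight w (π i0) ≤ ∑ p ∈ Finset.Icc ((1:ℤ),(1:ℤ)) (m,n), w p := by
    intro i0
    have hlt := i0.isLt
    obtain ⟨y, hle, hY0, hY1, hSteps, hmem, hw⟩ := extract (π i0) _ _ (hπ i0)
    have e1 : ((1:ℤ), (i0:ℤ)+1).1 + ((1:ℤ), (i0:ℤ)+1).2 = 1 + ((i0:ℤ)+1) := rfl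
    have e2 : (m, n - (j:ℤ) + (i0:ℤ) + 1).1 + (m, n - (j:ℤ) + (i0:ℤ) + 1).2
        = m + (n - (j:ℤ) + (i0:ℤ) + 1) := rfl
    rw [hw w]
    simp only [e1, e2] at hle hY0 hY1 hSteps ⊢
    have hY0' : y (1 + ((i0:ℤ)+1)) = (i0:ℤ)+1 := hY0
    have hY1' : y (m + (n - (j:ℤ) + (i0:ℤ) + 1)) = n - (j:ℤ) + (i0:ℤ) + 1 := hY1
    apply sum_image_le _ _ (fun t => cell y t) w
    · intro a ha b hb heq
      have ca := cell_sum y a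
      have cb := cell_sum y b
      rw [heq] at ca
      omega
    · intro a ha
      rw [Finset.mem_Icc] at ha
      have hb1 := hSteps.bound (le_refl _) ha.1 (by omega)
      have hb2 := hSteps.bound ha.1 ha.2 (le_refl _)
      rw [hY0'] at hb1
      rw [hY1'] at hb2
      show cell y a ∈ Finset.Icc ((1:ℤ),(1:ℤ)) (m,n)
      rw [Finset.mem_Icc, cell]
      constructor
      · rw [Prod.mk_le_mk]
        constructor <;> omega
      · rw [Prod.mk_le_mk]
        constructor <;> omega
  calc ∑ i0 : Fin j, pathWeight w (π i0)
      ≤ ∑ _i0 : Fin j, (∑ p ∈ Finset.Icc ((1:ℤ),(1:ℤ)) (m,n), w p) :=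
        Finset.sum_le_sum (fun i0 _ => hpath i0)
    _ = j * (∑ p ∈ Finset.Icc ((1:ℤ),(1:ℤ)) (m,n), w p) := by
        rw [Finset.sum_const, Finset.card_univ, Fintype.card_fin, smul_eq_mul]



end S15aux

open S15aux in
theorem statement15 (w : ℤ × ℤ → ℕ) (hsym : ∀ i j : ℤ, w (i, j) = w (j, i))
    (m n : ℤ) (hm : 1 ≤ m) (hn : 1 ≤ n) (k : ℕ) (hk : 2 ≤ k)
    (hk' : (k : ℤ) + 1 ≤ min m n) :
    (lppG w m n (k + 1) : ℤ) - lppG w m n k ≤ (lppG w m n k : ℤ) - lppG w m n (k - 1) := by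
  classical
  have hm' : (k:ℤ) + 1 ≤ m := le_trans hk' (min_le_left m n)
  have hn' : (k:ℤ) + 1 ≤ n := le_trans hk' (min_le_right m n)
  have hSmem : ∀ (j : ℕ), 1 ≤ j → (j:ℤ) ≤ m → (j:ℤ) ≤ n →
      lppG w m n j ∈ {S : ℕ | ∃ π : Fin j → List (ℤ × ℤ),
        (∀ i : Fin j, IsUpRightPath (1, (i : ℤ) + 1) (m, n - (j : ℤ) + (i : ℤ) + 1) (π i)) ∧
        (∀ i i' : Fin j, i ≠ i' → ∀ v, v ∈ π i → v ∉ π i') ∧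
        S = ∑ i : Fin j, pathWeight w (π i)} := by
    intro j h1 h2 h3
    apply Nat.sSup_mem
    · have hF := witnessFam (j:ℤ) ((n - (j:ℤ)) + m) (n - (j:ℤ)) m (by omega) h2 (by omega) rfl
      obtain ⟨π, hπ, hd, hs⟩ := fam_to_tuple w j m (n - (j:ℤ)) (by omega) _ hF
      exact ⟨_, π, hπ, hd, rfl⟩
    · exact bddAboveSet w m n j hn
  obtain ⟨πA, hπA, hdA, hSA⟩ := hSmem (k+1) (by omega) (by omega) (by omega)
  obtain ⟨πB, hπB, hdB, hSB⟩ := hSmem (k-1) (by omega) (by omega) (by omega)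
  obtain ⟨A, hFA, hsumA⟩ := tuple_to_fam w (k+1) m (n - ((k+1:ℕ):ℤ)) πA hπA hdA
  obtain ⟨B, hFB, hsumB⟩ := tuple_to_fam w (k-1) m (n - ((k-1:ℕ):ℤ)) πB hπB hdB
  have ck1 : ((k+1:ℕ):ℤ) = (k:ℤ)+1 := by push_cast; ring
  have ck2 : ((k-1:ℕ):ℤ) = (k:ℤ)-1 := by omega
  have cE1 : (n - ((k+1:ℕ):ℤ)) + m = m+n-(k:ℤ)-1 := by omega
  have cE2 : (n - ((k-1:ℕ):ℤ)) + m = m+n-(k:ℤ)+1 := by omega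
  have ce01 : n - ((k+1:ℕ):ℤ) = n-(k:ℤ)-1 := by omega
  have ce02 : n - ((k-1:ℕ):ℤ) = n-(k:ℤ)+1 := by omega
  have l1 : n - ((k:ℤ)+1) + m = m+n-(k:ℤ)-1 := by ring
  have l2 : n - ((k:ℤ)+1) = n-(k:ℤ)-1 := by ring
  have l3 : (n-(k:ℤ)-1) + m = m+n-(k:ℤ)-1 := by ring
  have l5 : n - ((k:ℤ)-1) = n-(k:ℤ)+1 := by ring
  have l6 : (n-(k:ℤ)+1) + m = m+n-(k:ℤ)+1 := by ring
  have l7 : n - ((k:ℤ)-1) + m = m+n-(k:ℤ)+1 := by ring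
  simp only [ck1, cE1, ce01, l1, l2, l3] at hFA hsumA
  simp only [ck2, cE2, ce02, l5, l6, l7] at hFB hsumB
  have hfc := famC (K := (k:ℤ)) (m := m) (n := n) (by omega) (by omega) (by omega) hFA hFB
  have hfd := famD (K := (k:ℤ)) (m := m) (n := n) (by omega) (by omega) (by omega) hFA hFB
  have hwt := weightCD (K := (k:ℤ)) (m := m) (n := n) (by omega) (by omega) (by omega) hFA hFB w
  have cE3 : (n - (k:ℤ)) + m = m+n-(k:ℤ) := by ring
  have hfc' : Fam ((k:ℕ):ℤ) ((n - (k:ℤ)) + m) (n - (k:ℤ)) (Cf m n (k:ℤ) A B) := by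
    rw [cE3]; exact hfc
  have hfd' : Fam ((k:ℕ):ℤ) ((n - (k:ℤ)) + m) (n - (k:ℤ)) (Df m n (k:ℤ) A B) := by
    rw [cE3]; exact hfd
  obtain ⟨πC, hπC, hdC, hSC⟩ := fam_to_tuple w k m (n - (k:ℤ)) (by omega) _ hfc'
  obtain ⟨πD, hπD, hdD, hSD⟩ := fam_to_tuple w k m (n - (k:ℤ)) (by omega) _ hfd'
  simp only [cE3] at hSC hSD
  have hCle : (∑ i0 : Fin k, pathWeight w (πC i0)) ≤ lppG w m n k := by
    apply le_csSup (bddAboveSet w m n k hn)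
    exact ⟨πC, hπC, hdC, rfl⟩
  have hDle : (∑ i0 : Fin k, pathWeight w (πD i0)) ≤ lppG w m n k := by
    apply le_csSup (bddAboveSet w m n k hn)
    exact ⟨πD, hπD, hdD, rfl⟩
  have key : lppG w m n (k+1) + lppG w m n (k-1) ≤ lppG w m n k + lppG w m n k := by
    calc lppG w m n (k+1) + lppG w m n (k-1)
        = (∑ i0 : Fin (k+1), pathWeight w (πA i0))
          + (∑ i0 : Fin (k-1), pathWeight w (πB i0)) := by rw [hSA, hSB]
      _ = (∑ i ∈ Finset.Icc 1 ((k:ℤ)+1), ∑ t ∈ Finset.Icc (i+1) ((m+n-(k:ℤ)-1)+i),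
            w (cell (A i) t))
          + (∑ i ∈ Finset.Icc 1 ((k:ℤ)-1), ∑ t ∈ Finset.Icc (i+1) ((m+n-(k:ℤ)+1)+i),
            w (cell (B i) t)) := by rw [hsumA, hsumB]
      _ ≤ (∑ i ∈ Finset.Icc 1 (k:ℤ), ∑ t ∈ Finset.Icc (i+1) ((m+n-(k:ℤ))+i),
            w (cell (Cf m n (k:ℤ) A B i) t))
          + (∑ i ∈ Finset.Icc 1 (k:ℤ), ∑ t ∈ Finset.Icc (i+1) ((m+n-(k:ℤ))+i),
            w (cell (Df m n (k:ℤ) A B i) t)) := hwt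
      _ = (∑ i0 : Fin k, pathWeight w (πC i0)) + (∑ i0 : Fin k, pathWeight w (πD i0)) := by
            rw [hSC, hSD]
      _ ≤ lppG w m n k + lppG w m n k := add_le_add hCle hDle
  omega
end
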